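/- arXiv:1908.11467 — 4 statements merged into one kernel-verified Lean document; each statement's English description precedes it below -/
import Mathlib

section
/- Fix N ∈ ℕ with N ≥ 1, and real numbers α, β, γ_1, γ_2 such that: 0 < |γ_1 − γ_2| < 1; α > max(0, γ_2 − γ_1); −β − N > max(0, γ_2 − γ_1); β ≠ −m and β − γ_1 + γ_2 ≠ −m for every m ∈ ℕ. Define G : ℝ → ℝ by G(x) = Γ(α + x − γ_2) · Γ(β + N − x + γ_2) / (Γ(α) · Γ(β) · Γ(x − γ_1 + 1) · Γ(N − x + γ_1 + 1) · Γ(x − γ_2 + 1) · Γ(N − x + γ_2 + 1)). Then for each j ∈ {1,2} the numbers (−1)^m G(γ_j + m), 0 ≤ m ≤ N, are all nonzero and of the same sign; that is, ((−1)^m G(γ_j + m)) · ((−1)^{m'} G(γ_j + m')) > 0 for all 0 ≤ m, m' ≤ N. -/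
open Finset

private lemma gamma_shift (x : ℝ) : ∀ n : ℕ, (∀ k : ℕ, k < n → x + k ≠ 0) →
    Real.Gamma (x + n) = (∏ k ∈ Finset.range n, (x + k)) * Real.Gamma x
  | 0, _ => by simp
  | (n + 1), h => by
    have h1 : x + (n : ℝ) ≠ 0 := h n (Nat.lt_succ_self n)
    have e : x + ((n : ℕ) + 1 : ℕ) = (x + n) + 1 := by push_cast; ring
    rw [e, Real.Gamma_add_one h1, gamma_shift x n (fun k hk => h k (hk.trans (Nat.lt_succ_self n))),
      Finset.prod_range_succ]
    ring

private lemma key (b : ℝ) (n : ℕ) (hbn : b + n ≤ 0) (hbz : ∀ k : ℕ, b ≠ -(k : ℝ)) :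
    ∃ q > 0, Real.Gamma (b + n) = (-1 : ℝ) ^ n * q * Real.Gamma b := by
  have hneg : ∀ k : ℕ, k < n → b + k < 0 := by
    intro k hk
    have : (k : ℝ) < n := by exact_mod_cast hk
    linarith
  have hne : ∀ k : ℕ, k < n → b + (k : ℝ) ≠ 0 := by
    intro k hk
    have := hbz k
    intro h0; apply this; linarith
  refine ⟨∏ k ∈ Finset.range n, (-(b + k)), Finset.prod_pos (fun k hk => by
      have := hneg k (Finset.mem_range.mp hk); linarith), ?_⟩
  rw [gamma_shift b n hne]
  have he : ∀ k ∈ Finset.range n, b + (k : ℝ) = (-1) * -(b + k) := by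
    intro k _; ring
  rw [Finset.prod_congr rfl he, Finset.prod_mul_distrib, Finset.prod_const,
    Finset.card_range]

private lemma aux_main (N : ℕ) (a b c₁ c₂ d₁ d₂ : ℝ)
    (ha : 0 < a) (hbN : b + N < 0) (hbz : ∀ k : ℕ, b ≠ -(k : ℝ))
    (hc₁ : -1 < c₁) (hc₂ : -1 < c₂) (hd₁ : -1 < d₁) (hd₂ : -1 < d₂)
    (m : ℕ) (hm : m ≤ N) :
    ∃ p > 0, Real.Gamma (a + m) * Real.Gamma (b + ((N : ℝ) - m)) /
        (Real.Gamma (c₁ + m + 1) * Real.Gamma (c₂ + ((N : ℝ) - m) + 1) *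
          Real.Gamma (d₁ + m + 1) * Real.Gamma (d₂ + ((N : ℝ) - m) + 1)) =
      (-1 : ℝ) ^ (N - m) * Real.Gamma b * p := by
  set n : ℕ := N - m with hn
  have hcast : ((N : ℝ) - m) = (n : ℝ) := by
    rw [hn]; push_cast [Nat.cast_sub hm]; ring
  have hnN : (n : ℝ) ≤ (N : ℝ) := by exact_mod_cast Nat.sub_le N m
  obtain ⟨q, hq, hqe⟩ := key b n (by linarith) hbz
  have hA : 0 < Real.Gamma (a + m) :=
    Real.Gamma_pos_of_pos (by positivity)
  have hm0 : (0 : ℝ) ≤ (m : ℝ) := Nat.cast_nonneg m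
  have hn0 : (0 : ℝ) ≤ (n : ℝ) := Nat.cast_nonneg n
  have h1 : 0 < Real.Gamma (c₁ + m + 1) := Real.Gamma_pos_of_pos (by linarith)
  have h2 : 0 < Real.Gamma (c₂ + ((N : ℝ) - m) + 1) := by
    rw [hcast]; exact Real.Gamma_pos_of_pos (by linarith)
  have h3 : 0 < Real.Gamma (d₁ + m + 1) := Real.Gamma_pos_of_pos (by linarith)
  have h4 : 0 < Real.Gamma (d₂ + ((N : ℝ) - m) + 1) := by
    rw [hcast]; exact Real.Gamma_pos_of_pos (by linarith)
  refine ⟨Real.Gamma (a + m) * q /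
      (Real.Gamma (c₁ + m + 1) * Real.Gamma (c₂ + ((N : ℝ) - m) + 1) *
        Real.Gamma (d₁ + m + 1) * Real.Gamma (d₂ + ((N : ℝ) - m) + 1)), by positivity, ?_⟩
  rw [hcast, hqe]
  field_simp

private lemma conclude (C : ℝ) (hC : C ≠ 0) (f : ℕ → ℝ) (N : ℕ)
    (h : ∀ m : ℕ, m ≤ N → ∃ p > 0, f m = C * p) :
    ∀ m m' : ℕ, m ≤ N → m' ≤ N → 0 < f m * f m' := by
  intro m m' hm hm'
  obtain ⟨p, hp, he⟩ := h m hm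
  obtain ⟨p', hp', he'⟩ := h m' hm'
  rw [he, he']
  have : C * p * (C * p') = C ^ 2 * (p * p') := by ring
  rw [this]
  exact mul_pos (by positivity) (mul_pos hp hp')

/-- Sign constancy for the paper's Kravchuk–Hahn I family under condition (a) with
`N₁ = N₂ = N`: on each shifted lattice `γ_j + {0,…,N}` the numbers `(−1)^m G(γ_j + m)`
are nonzero and all of the same sign. -/
theorem stmt_12 (N : ℕ) (hN : 1 ≤ N) (α β γ₁ γ₂ : ℝ)
    (hγ0 : 0 < |γ₁ - γ₂|) (hγ1 : |γ₁ - γ₂| < 1)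
    (hα : α > max 0 (γ₂ - γ₁)) (hβN : -β - N > max 0 (γ₂ - γ₁))
    (hβ : ∀ m : ℕ, β ≠ -(m : ℝ)) (hβγ : ∀ m : ℕ, β - γ₁ + γ₂ ≠ -(m : ℝ))
    (G : ℝ → ℝ)
    (hG : ∀ x : ℝ, G x = Real.Gamma (α + x - γ₂) * Real.Gamma (β + N - x + γ₂) /
      (Real.Gamma α * Real.Gamma β * Real.Gamma (x - γ₁ + 1) *
        Real.Gamma ((N : ℝ) - x + γ₁ + 1) * Real.Gamma (x - γ₂ + 1) *
          Real.Gamma ((N : ℝ) - x + γ₂ + 1))) :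
    (∀ m m' : ℕ, m ≤ N → m' ≤ N →
      0 < ((-1 : ℝ) ^ m * G (γ₁ + m)) * ((-1 : ℝ) ^ m' * G (γ₁ + m'))) ∧
    (∀ m m' : ℕ, m ≤ N → m' ≤ N →
      0 < ((-1 : ℝ) ^ m * G (γ₂ + m)) * ((-1 : ℝ) ^ m' * G (γ₂ + m'))) := by
  have habs := abs_lt.mp hγ1
  have hα0 : 0 < α := lt_of_le_of_lt (le_max_left _ _) hα
  have hαδ : γ₂ - γ₁ < α := lt_of_le_of_lt (le_max_right _ _) hα
  have hβN0 : β + N < 0 := by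
    have := lt_of_le_of_lt (le_max_left _ _) hβN; linarith
  have hβNδ : β + N + (γ₂ - γ₁) < 0 := by
    have := lt_of_le_of_lt (le_max_right _ _) hβN; linarith
  have hΓα : 0 < Real.Gamma α := Real.Gamma_pos_of_pos hα0
  have hΓβ : Real.Gamma β ≠ 0 := Real.Gamma_ne_zero hβ
  -- unified claim for γ ∈ {γ₁, γ₂}
  have main : ∀ γ : ℝ, 0 < α + γ - γ₂ → β + γ₂ - γ + N < 0 →
      (∀ k : ℕ, β + γ₂ - γ ≠ -(k : ℝ)) →
      -1 < γ - γ₁ → -1 < γ₁ - γ → -1 < γ - γ₂ → -1 < γ₂ - γ →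
      ∀ m m' : ℕ, m ≤ N → m' ≤ N →
        0 < ((-1 : ℝ) ^ m * G (γ + m)) * ((-1 : ℝ) ^ m' * G (γ + m')) := by
    intro γ ha hbN hbz hc₁ hc₂ hd₁ hd₂
    set a : ℝ := α + γ - γ₂ with ha_def
    set b : ℝ := β + γ₂ - γ with hb_def
    have hΓb : Real.Gamma b ≠ 0 := Real.Gamma_ne_zero hbz
    set C : ℝ := (-1 : ℝ) ^ N * Real.Gamma b / (Real.Gamma α * Real.Gamma β) with hC_def
    have hC : C ≠ 0 := by
      rw [hC_def]
      apply div_ne_zero (mul_ne_zero (pow_ne_zero _ (by norm_num)) hΓb)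
      exact mul_ne_zero hΓα.ne' hΓβ
    refine conclude C hC _ N ?_
    intro m hm
    obtain ⟨p, hp, hpe⟩ := aux_main N a b (γ - γ₁) (γ₁ - γ) (γ - γ₂) (γ₂ - γ)
      ha hbN hbz hc₁ hc₂ hd₁ hd₂ m hm
    have e1 : α + (γ + (m : ℝ)) - γ₂ = a + m := by rw [ha_def]; ring
    have e2 : β + (N : ℝ) - (γ + m) + γ₂ = b + ((N : ℝ) - m) := by rw [hb_def]; ring
    have e3 : (γ + (m : ℝ)) - γ₁ + 1 = (γ - γ₁) + m + 1 := by ring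
    have e4 : (N : ℝ) - (γ + m) + γ₁ + 1 = (γ₁ - γ) + ((N : ℝ) - m) + 1 := by ring
    have e5 : (γ + (m : ℝ)) - γ₂ + 1 = (γ - γ₂) + m + 1 := by ring
    have e6 : (N : ℝ) - (γ + m) + γ₂ + 1 = (γ₂ - γ) + ((N : ℝ) - m) + 1 := by ring
    have hGv : G (γ + m) = Real.Gamma (a + m) * Real.Gamma (b + ((N : ℝ) - m)) /
        (Real.Gamma α * Real.Gamma β * Real.Gamma ((γ - γ₁) + m + 1) *
          Real.Gamma ((γ₁ - γ) + ((N : ℝ) - m) + 1) * Real.Gamma ((γ - γ₂) + m + 1) *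
            Real.Gamma ((γ₂ - γ) + ((N : ℝ) - m) + 1)) := by
      rw [hG (γ + m), e1, e2, e3, e4, e5, e6]
    -- denominator Gammas are positive
    have hm0 : (0 : ℝ) ≤ (m : ℝ) := Nat.cast_nonneg m
    have hmn : (m : ℝ) ≤ (N : ℝ) := by exact_mod_cast hm
    have h1 : 0 < Real.Gamma ((γ - γ₁) + m + 1) := Real.Gamma_pos_of_pos (by linarith)
    have h2 : 0 < Real.Gamma ((γ₁ - γ) + ((N : ℝ) - m) + 1) :=
      Real.Gamma_pos_of_pos (by linarith)
    have h3 : 0 < Real.Gamma ((γ - γ₂) + m + 1) := Real.Gamma_pos_of_pos (by linarith)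
    have h4 : 0 < Real.Gamma ((γ₂ - γ) + ((N : ℝ) - m) + 1) :=
      Real.Gamma_pos_of_pos (by linarith)
    have hGeq : G (γ + m) = ((-1 : ℝ) ^ (N - m) * Real.Gamma b * p) /
        (Real.Gamma α * Real.Gamma β) := by
      rw [hGv, ← hpe, div_div]
      congr 1
      ring
    have hpow : ((-1 : ℝ)) ^ m * (-1 : ℝ) ^ (N - m) = (-1 : ℝ) ^ N := by
      rw [← pow_add]; congr 1; omega
    refine ⟨p, hp, ?_⟩
    calc (-1 : ℝ) ^ m * G (γ + m)
        = ((-1 : ℝ) ^ m * (-1 : ℝ) ^ (N - m)) *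
            (Real.Gamma b * p / (Real.Gamma α * Real.Gamma β)) := by rw [hGeq]; ring
      _ = C * p := by rw [hpow, hC_def]; ring
  obtain ⟨hl, hr⟩ := habs
  constructor
  · refine main γ₁ (by linarith) (by linarith) ?_ (by linarith) (by linarith)
      (by linarith) (by linarith)
    intro k hk
    exact hβγ k (by linarith)
  · refine main γ₂ (by linarith) (by linarith) ?_ (by linarith) (by linarith)
      (by linarith) (by linarith)
    intro k hk
    exact hβ k (by linarith)
end

section
/- Fix N, n ∈ ℕ with 1 ≤ N and n ≤ N, and real numbers α, β, γ_1, γ_2 such that: 0 < |γ_1 − γ_2| < 1; α > max(0, γ_2 − γ_1); −β − N > max(0, γ_2 − γ_1); β ≠ −m and β − γ_1 + γ_2 ≠ −m for every m ∈ ℕ; and α + β ≠ z for every integer z with z = N or 3 − 2N ≤ z ≤ N − 2. Define G(x) = Γ(α + x − γ_2)Γ(β + N − x + γ_2) / (Γ(α)Γ(β)Γ(x − γ_1 + 1)Γ(N − x + γ_1 + 1)Γ(x − γ_2 + 1)Γ(N − x + γ_2 + 1)) and Q : ℝ → ℝ by Q(x) = Σ_{j=0}^{n} C(n,j) · Π_{i=0}^{j−1}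 [(x − γ_1 − i)(x − γ_2 − i)(β + N − x + γ_2 + i)] · Π_{i=0}^{n−j−1} [(N − x + γ_1 − i)(x − γ_2 + α + i)(N − x + γ_2 − i)]. Then: (i) Q is the evaluation of a real polynomial of degree exactly 2n; (ii) for every j ∈ {1,2} and every natural number k < n, Σ_{m=0}^{N} Q(γ_j + m) · (γ_j + m)^k · (−1)^m · G(γ_j + m) = 0. -/
/-
Let `W k` (`weight k`) be `G` with parameters `α + n - k` and `N - n + k`, so `W n = G`. On both
lattices `γⱼ + ℤ` the Gamma recurrence gives `W k x = W (k + 1) x * c_{k+1}(x)` and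
`W k (x - 1) = -W (k + 1) x * e(x)` for monic cubics `c_{k+1}` (`stepPoly`) and `e` (`shiftPoly`).
Hence `∑ₗ C(k, l) W 0 (x - l) = W k x * q_k(x)` (the Rodrigues formula), where
`q_{k+1}(x) = c_{k+1}(x) q_k(x) - e(x) q_k(x - 1)` and `q_n = Q`. The leading terms of the two
monic cubics cancel, so each step raises the degree by two and multiplies the top coefficient by
`α + β + 3n - N - 3 - k`, which Condition MD2 keeps nonzero.

For orthogonality, substitute `u = m - l` in `∑ₘ ∑ₗ C(n, l) W 0 (γ + m - l) (γ + m)^k (-1)^m`: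
`W 0` is supported on `γ + {0, …, N - n}`, so what remains are `n`-th finite differences of
`x ↦ x^k`, which vanish for `k < n`.
-/

open Polynomial Finset

namespace Polynomial

variable {R : Type*} [CommRing R]

theorem coeff_taylor_of_natDegree_le_succ (q : R[X]) (r : R) {m : ℕ}
    (h : q.natDegree ≤ m + 1) :
    (taylor r q).coeff m = q.coeff m + (m + 1) * r * q.coeff (m + 1) := by
  have hd : (hasseDeriv m q).natDegree < 2 := (natDegree_hasseDeriv_le q m).trans_lt (by omega)
  rw [taylor_coeff, eval_eq_sum_range' hd, sum_range_succ, sum_range_one, hasseDeriv_coeff,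
    hasseDeriv_coeff, Nat.zero_add, Nat.choose_self, add_comm 1 m, Nat.choose_succ_self_right]
  push_cast
  ring

theorem natDegree_sub_taylor_neg_one_le_and_coeff (q : R[X]) {m : ℕ} (h : q.natDegree ≤ m + 1) :
    (q - taylor (-1) q).natDegree ≤ m ∧
      (q - taylor (-1) q).coeff m = (m + 1) * q.coeff (m + 1) := by
  have hcoeff : ∀ i, m ≤ i → (q - taylor (-1) q).coeff i = (i + 1) * q.coeff (i + 1) := by
    intro i hi
    rw [coeff_sub, coeff_taylor_of_natDegree_le_succ q (-1) (by omega)]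
    ring
  refine ⟨natDegree_le_iff_coeff_eq_zero.2 fun i hi => ?_, hcoeff m le_rfl⟩
  rw [hcoeff i (by omega), coeff_eq_zero_of_natDegree_lt (by omega), mul_zero]

theorem Monic.natDegree_sub_le_and_coeff {c e : R[X]} {s : ℕ} (hc : c.Monic) (he : e.Monic)
    (hcs : c.natDegree = s + 1) (hes : e.natDegree = s + 1) :
    (c - e).natDegree ≤ s ∧ (c - e).coeff s = c.nextCoeff - e.nextCoeff := by
  refine ⟨natDegree_le_iff_coeff_eq_zero.2 fun i hi => ?_, ?_⟩
  · rcases (Nat.succ_le_of_lt hi).eq_or_lt with rfl | hlt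
    · rw [coeff_sub, Nat.succ_eq_add_one, ← hcs, hc.coeff_natDegree, hcs, ← hes,
        he.coeff_natDegree, sub_self]
    · rw [coeff_sub, coeff_eq_zero_of_natDegree_lt (by omega),
        coeff_eq_zero_of_natDegree_lt (by omega), sub_zero]
  · rw [coeff_sub, nextCoeff_of_natDegree_pos (by omega), nextCoeff_of_natDegree_pos (by omega),
      hcs, hes, Nat.add_sub_cancel]

theorem Monic.natDegree_mul_sub_taylor_le_and_coeff {c q : R[X]} {s m : ℕ} (hc : c.Monic)
    (hcs : c.natDegree = s + 1) (hq : q.natDegree ≤ m) :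
    (c * (q - taylor (-1) q)).natDegree ≤ m + s ∧
      (c * (q - taylor (-1) q)).coeff (m + s) = m * q.coeff m := by
  cases m with
  | zero =>
    rw [eq_C_of_natDegree_le_zero hq, taylor_C, sub_self, mul_zero]
    simp
  | succ m =>
    obtain ⟨hdeg, hcoeff⟩ := natDegree_sub_taylor_neg_one_le_and_coeff q hq
    have hsum : m + 1 + s = s + 1 + m := by omega
    refine ⟨(natDegree_mul_le_of_le hcs.le hdeg).trans hsum.ge, ?_⟩
    rw [hsum, coeff_mul_add_eq_of_natDegree_le hcs.le hdeg, ← hcs, hc.coeff_natDegree, hcoeff]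
    push_cast
    ring

theorem natDegree_mul_sub_mul_taylor_le_and_coeff {c e q : R[X]} {s m : ℕ} (hc : c.Monic)
    (he : e.Monic) (hcs : c.natDegree = s + 1) (hes : e.natDegree = s + 1)
    (hq : q.natDegree ≤ m) :
    (c * q - e * taylor (-1) q).natDegree ≤ m + s ∧
      (c * q - e * taylor (-1) q).coeff (m + s) =
        (c.nextCoeff - e.nextCoeff + m) * q.coeff m := by
  have hsplit :
      c * q - e * taylor (-1) q = c * (q - taylor (-1) q) + (c - e) * taylor (-1) q := by
    ring
  have hq' : (taylor (-1) q).natDegree ≤ m := (natDegree_taylor q _).trans_le hq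
  have hq'm : (taylor (-1) q).coeff m = q.coeff m := by
    rw [coeff_taylor_of_natDegree_le_succ q _ (by omega),
      coeff_eq_zero_of_natDegree_lt (show q.natDegree < m + 1 by omega), mul_zero, add_zero]
  obtain ⟨hdeg₁, hcoeff₁⟩ := hc.natDegree_mul_sub_taylor_le_and_coeff hcs hq
  obtain ⟨hdeg₂, hcoeff₂⟩ := hc.natDegree_sub_le_and_coeff he hcs hes
  rw [hsplit]
  refine ⟨natDegree_add_le_of_degree_le hdeg₁ ((natDegree_mul_le_of_le hdeg₂ hq').trans ?_), ?_⟩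
  · omega
  · rw [coeff_add, hcoeff₁, add_comm m s, coeff_mul_add_eq_of_natDegree_le hdeg₂ hq', hcoeff₂,
      hq'm]
    ring

end Polynomial

theorem sum_range_neg_one_pow_mul_choose_mul_pow_eq_zero {R : Type*} [CommRing R] {k n : ℕ}
    (hk : k < n) (y : R) :
    ∑ l ∈ range (n + 1), (-1) ^ l * (n.choose l : R) * (y + l) ^ k = 0 := by
  have h := congr_fun (fwdDiff_iter_pow_eq_zero_of_lt (R := R) hk) y
  rw [fwdDiff_iter_eq_sum_shift, Pi.zero_apply] at h
  calc ∑ l ∈ range (n + 1), (-1) ^ l * (n.choose l : R) * (y + l) ^ k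
      = (-1) ^ n *
          ∑ l ∈ range (n + 1), ((-1 : ℤ) ^ (n - l) * n.choose l) • (y + l • 1) ^ k := by
        rw [mul_sum]
        refine sum_congr rfl fun l hl => ?_
        obtain ⟨j, rfl⟩ := Nat.exists_eq_add_of_le (Nat.lt_succ_iff.1 (mem_range.1 hl))
        have hsq : ((-1 : R) ^ j) ^ 2 = 1 := by rw [← pow_mul, pow_mul', neg_one_sq, one_pow]
        rw [Nat.add_sub_cancel_left, zsmul_eq_mul, nsmul_one]
        push_cast
        linear_combination (-(-1) ^ l * ((l + j).choose l : R) * (y + l) ^ k) * hsq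
    _ = 0 := by rw [h, mul_zero]

namespace Real

theorem inv_Gamma_eq_mul_inv_Gamma_add_one (s : ℝ) :
    (Gamma s)⁻¹ = s * (Gamma (s + 1))⁻¹ := by
  rcases eq_or_ne s 0 with rfl | hs
  · simp [Gamma_zero]
  · rw [Gamma_add_one hs, mul_inv, ← mul_assoc, mul_inv_cancel₀ hs, one_mul]

theorem Gamma_intCast_eq_zero_of_nonpos {z : ℤ} (hz : z ≤ 0) : Gamma z = 0 :=
  (Gamma_eq_zero_iff _).2 ⟨(-z).toNat, by exact_mod_cast (by omega : z = -((-z).toNat : ℤ))⟩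

end Real

theorem sum_range_eq_sum_range_add_of_eq_zero {M : Type*} [AddCommMonoid M] (f : ℕ → M)
    {N l L : ℕ} (hlL : l + L ≤ N) (hlow : ∀ m < l, f m = 0)
    (hhigh : ∀ m, l + L < m → f m = 0) :
    ∑ m ∈ range (N + 1), f m = ∑ u ∈ range (L + 1), f (l + u) := by
  rw [← Nat.add_sub_cancel_left (n := l) (m := L + 1), ← sum_Ico_eq_sum_range]
  refine (sum_subset (fun m hm => ?_) fun m hm hm' => ?_).symm
  · simp only [mem_Ico, mem_range] at hm ⊢
    omega
  · simp only [mem_Ico, mem_range, not_and_or, not_le, not_lt] at hm hm'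
    rcases hm' with h | h
    · exact hlow m h
    · exact hhigh m (by omega)

noncomputable def binomShiftSum (k : ℕ) (f : ℝ → ℝ) (x : ℝ) : ℝ :=
  ∑ l ∈ range (k + 1), (k.choose l : ℝ) * f (x - l)

theorem binomShiftSum_succ (k : ℕ) (f : ℝ → ℝ) (x : ℝ) :
    binomShiftSum (k + 1) f x = binomShiftSum k f x + binomShiftSum k f (x - 1) := by
  rw [binomShiftSum, sum_choose_succ_mul (fun l _ => f (x - l)), binomShiftSum, binomShiftSum]
  congr 1
  refine sum_congr rfl fun l _ => ?_
  rw [Nat.cast_succ, sub_add_eq_sub_sub_swap]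

structure KravchukHahnData where
  (α β γ₁ γ₂ : ℝ)
  (N n : ℕ)

namespace KravchukHahnData

variable (P : KravchukHahnData) {γ : ℝ}

noncomputable def stepPoly (k : ℕ) : ℝ[X] :=
  (X - C (P.N - P.n + k + P.γ₁ : ℝ)) * (X + C (P.α + P.n - k - P.γ₂)) *
    (X - C (P.N - P.n + k + P.γ₂ : ℝ))

noncomputable def shiftPoly : ℝ[X] :=
  (X - C (P.β + P.N + P.γ₂)) * (X - C P.γ₁) * (X - C P.γ₂)

theorem eval_stepPoly (k : ℕ) (x : ℝ) : (P.stepPoly k).eval x =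
      (P.N - P.n + k + P.γ₁ - x) * (x - P.γ₂ + P.α + P.n - k) * (P.N - P.n + k + P.γ₂ - x) := by
  simp only [stepPoly, eval_mul, eval_sub, eval_add, eval_X, eval_C]
  ring

theorem eval_shiftPoly (x : ℝ) :
    P.shiftPoly.eval x = -((P.β + P.N + P.γ₂ - x) * (x - P.γ₁) * (x - P.γ₂)) := by
  simp only [shiftPoly, eval_mul, eval_sub, eval_X, eval_C]
  ring

theorem eval_stepPoly_succ_add_one (k : ℕ) (y : ℝ) :
    (P.stepPoly (k + 1)).eval (y + 1) = (P.stepPoly k).eval y := by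
  rw [eval_stepPoly, eval_stepPoly]
  push_cast
  ring

theorem stepPoly_monic (k : ℕ) : (P.stepPoly k).Monic :=
  ((monic_X_sub_C _).mul (monic_X_add_C _)).mul (monic_X_sub_C _)

theorem shiftPoly_monic : P.shiftPoly.Monic :=
  ((monic_X_sub_C _).mul (monic_X_sub_C _)).mul (monic_X_sub_C _)

theorem natDegree_stepPoly (k : ℕ) : (P.stepPoly k).natDegree = 3 := by
  unfold stepPoly
  compute_degree!

theorem natDegree_shiftPoly : P.shiftPoly.natDegree = 3 := by
  unfold shiftPoly
  compute_degree!

theorem nextCoeff_stepPoly_sub_nextCoeff_shiftPoly (k : ℕ) :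
    (P.stepPoly k).nextCoeff - P.shiftPoly.nextCoeff = P.α + P.β + 3 * P.n - P.N - 3 * k := by
  rw [stepPoly, shiftPoly,
    ((monic_X_sub_C _).mul (monic_X_add_C _)).nextCoeff_mul (monic_X_sub_C _),
    (monic_X_sub_C _).nextCoeff_mul (monic_X_add_C _),
    ((monic_X_sub_C _).mul (monic_X_sub_C _)).nextCoeff_mul (monic_X_sub_C _),
    (monic_X_sub_C _).nextCoeff_mul (monic_X_sub_C _)]
  simp only [nextCoeff_X_sub_C, nextCoeff_X_add_C]
  ring

noncomputable def rodriguesPoly : ℕ → ℝ[X]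
  | 0 => 1
  | k + 1 => P.stepPoly (k + 1) * rodriguesPoly k - P.shiftPoly * taylor (-1) (rodriguesPoly k)

noncomputable def leadProd (k : ℕ) : ℝ := ∏ j ∈ range k, (P.α + P.β + 3 * P.n - P.N - 3 - j)

theorem natDegree_rodriguesPoly_le_and_coeff (k : ℕ) :
    (P.rodriguesPoly k).natDegree ≤ 2 * k ∧
      (P.rodriguesPoly k).coeff (2 * k) = P.leadProd k := by
  induction k with
  | zero => simp [rodriguesPoly, leadProd]
  | succ k ih =>
    obtain ⟨hdeg, hcoeff⟩ := natDegree_mul_sub_mul_taylor_le_and_coeff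
      (P.stepPoly_monic (k + 1)) P.shiftPoly_monic (P.natDegree_stepPoly _) P.natDegree_shiftPoly
      ih.1
    rw [rodriguesPoly, show 2 * (k + 1) = 2 * k + 2 by ring]
    refine ⟨hdeg, ?_⟩
    rw [hcoeff, ih.2, nextCoeff_stepPoly_sub_nextCoeff_shiftPoly, leadProd, leadProd,
      prod_range_succ]
    push_cast
    ring

theorem leadProd_ne_zero (hnN : P.n ≤ P.N)
    (hMD2 : ∀ z : ℤ, (z = (P.N : ℤ) ∨ (3 - 2 * (P.N : ℤ) ≤ z ∧ z ≤ (P.N : ℤ) - 2)) →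
      P.α + P.β ≠ (z : ℝ)) : P.leadProd P.n ≠ 0 := by
  refine prod_ne_zero_iff.2 fun j hj => sub_ne_zero.2 ?_
  rw [mem_range] at hj
  have hz := hMD2 (P.N + 3 + j - 3 * P.n) (by omega)
  contrapose! hz
  push_cast
  linarith

noncomputable def descProd (l : ℕ) (x : ℝ) : ℝ := ∏ i ∈ range l, -P.shiftPoly.eval (x - i)

noncomputable def ascProd (K m : ℕ) (x : ℝ) : ℝ :=
  ∏ i ∈ range m, (P.stepPoly K).eval (x + i)

noncomputable def rodriguesSum (k : ℕ) (x : ℝ) : ℝ :=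
  ∑ l ∈ range (k + 1), (k.choose l : ℝ) * (P.descProd l x * P.ascProd k (k - l) x)

theorem descProd_succ (l : ℕ) (x : ℝ) :
    P.descProd (l + 1) x = -P.shiftPoly.eval x * P.descProd l (x - 1) := by
  rw [descProd, prod_range_succ', descProd, mul_comm]
  push_cast
  simp only [sub_zero, sub_sub, add_comm (1 : ℝ)]

theorem ascProd_succ (K m : ℕ) (x : ℝ) :
    P.ascProd K (m + 1) x = (P.stepPoly K).eval x * P.ascProd K m (x + 1) := by
  rw [ascProd, prod_range_succ', ascProd, mul_comm]
  push_cast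
  simp only [add_zero, add_assoc, add_comm (1 : ℝ)]

theorem ascProd_succ_add_one (K m : ℕ) (x : ℝ) :
    P.ascProd (K + 1) m (x + 1) = P.ascProd K m x := by
  refine prod_congr rfl fun i _ => ?_
  rw [add_right_comm, eval_stepPoly_succ_add_one]

theorem rodriguesSum_succ (k : ℕ) (x : ℝ) :
    P.rodriguesSum (k + 1) x = (P.stepPoly (k + 1)).eval x * P.rodriguesSum k x
      - P.shiftPoly.eval x * P.rodriguesSum k (x - 1) := by
  rw [rodriguesSum, sum_choose_succ_mul (fun i j => P.descProd i x * P.ascProd (k + 1) j x),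
    sub_eq_add_neg, rodriguesSum, rodriguesSum, mul_sum, mul_sum, ← sum_neg_distrib]
  congr 1 <;> refine sum_congr rfl fun l hl => ?_
  · rw [Nat.sub_add_comm (Nat.lt_succ_iff.1 (mem_range.1 hl)), ascProd_succ,
      ascProd_succ_add_one]
    ring
  · rw [descProd_succ, ← ascProd_succ_add_one P k _ (x - 1), sub_add_cancel]
    ring

theorem eval_rodriguesPoly (k : ℕ) (x : ℝ) :
    (P.rodriguesPoly k).eval x = P.rodriguesSum k x := by
  induction k generalizing x with
  | zero => simp [rodriguesPoly, rodriguesSum, descProd, ascProd]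
  | succ k ih =>
    rw [rodriguesPoly, rodriguesSum_succ, eval_sub, eval_mul, eval_mul, taylor_eval, ih, ih,
      sub_eq_add_neg x 1]

open Real in
/-- `weight 0` is the paper's `Gₙ`. Since `Γ (-m) = 0` and `x / 0 = 0` in Lean, the quotient
vanishes exactly where the reciprocal Gamma factors do. -/
noncomputable def weight (k : ℕ) (y : ℝ) : ℝ :=
  Gamma (P.α + P.n - k + y - P.γ₂) * Gamma (P.β + P.N - y + P.γ₂) /
    (Gamma P.α * Gamma P.β * Gamma (y - P.γ₁ + 1) * Gamma (P.N - P.n + k - y + P.γ₁ + 1) *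
      Gamma (y - P.γ₂ + 1) * Gamma (P.N - P.n + k - y + P.γ₂ + 1))

theorem weight_succ_mul_eval_stepPoly {k : ℕ} {x : ℝ}
    (hA : P.α + P.n - (k + 1) + x - P.γ₂ ≠ 0) :
    P.weight (k + 1) x * (P.stepPoly (k + 1)).eval x = P.weight k x := by
  have e₁ : P.α + P.n - k + x - P.γ₂ = (P.α + P.n - (k + 1) + x - P.γ₂) + 1 := by ring
  have e₂ (γ : ℝ) :
      P.N - P.n + ((k + 1 : ℕ) : ℝ) - x + γ + 1 = (P.N - P.n + k - x + γ + 1) + 1 := by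
    push_cast; ring
  simp only [weight, div_eq_mul_inv, mul_inv, eval_stepPoly, e₁, e₂, Real.Gamma_add_one hA,
    Real.inv_Gamma_eq_mul_inv_Gamma_add_one (P.N - P.n + k - x + _ + 1)]
  push_cast
  ring

theorem weight_succ_mul_eval_shiftPoly {k : ℕ} {x : ℝ} (hB : P.β + P.N - x + P.γ₂ ≠ 0) :
    P.weight (k + 1) x * P.shiftPoly.eval x = -P.weight k (x - 1) := by
  have e₁ : P.β + P.N - (x - 1) + P.γ₂ = (P.β + P.N - x + P.γ₂) + 1 := by ring
  have e₂ (γ : ℝ) : x - 1 - γ + 1 = x - γ := by ring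
  have e₃ : P.α + P.n - k + (x - 1) - P.γ₂ = P.α + P.n - ((k + 1 : ℕ) : ℝ) + x - P.γ₂ := by
    push_cast; ring
  have e₄ (γ : ℝ) :
      P.N - P.n + k - (x - 1) + γ + 1 = P.N - P.n + ((k + 1 : ℕ) : ℝ) - x + γ + 1 := by
    push_cast; ring
  simp only [weight, div_eq_mul_inv, mul_inv, eval_shiftPoly, e₁, e₂, e₃, e₄,
    Real.Gamma_add_one hB, Real.inv_Gamma_eq_mul_inv_Gamma_add_one (x - _)]
  ring

theorem weight_eq_zero_of_neg (hγ : γ = P.γ₁ ∨ γ = P.γ₂) (k : ℕ) {z : ℤ} (hz : z < 0) :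
    P.weight k (γ + z) = 0 := by
  have h (γ' : ℝ) (h' : γ = γ') : Real.Gamma (γ + z - γ' + 1) = 0 := by
    rw [h', show γ' + z - γ' + 1 = ((z + 1 : ℤ) : ℝ) by push_cast; ring]
    exact Real.Gamma_intCast_eq_zero_of_nonpos (by omega)
  rcases hγ with hγ | hγ <;> simp [weight, h _ hγ]

theorem weight_eq_zero_of_lt (hγ : γ = P.γ₁ ∨ γ = P.γ₂) (k : ℕ) {z : ℤ}
    (hz : (P.N : ℤ) - P.n + k < z) : P.weight k (γ + z) = 0 := by
  have h (γ' : ℝ) (h' : γ = γ') : Real.Gamma (P.N - P.n + k - (γ + z) + γ' + 1) = 0 := by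
    rw [h', show (P.N - P.n + k - (γ' + z) + γ' + 1 : ℝ) = ((P.N - P.n + k - z + 1 : ℤ) : ℝ) by
      push_cast; ring]
    exact Real.Gamma_intCast_eq_zero_of_nonpos (by omega)
  rcases hγ with hγ | hγ <;> simp [weight, h _ hγ]

theorem weight_succ_mul_eval_stepPoly_lattice (hα : max 0 (P.γ₂ - P.γ₁) < P.α)
    (hγ : γ = P.γ₁ ∨ γ = P.γ₂) {k : ℕ} (hk : k < P.n) (z : ℤ) :
    P.weight (k + 1) (γ + z) * (P.stepPoly (k + 1)).eval (γ + z) = P.weight k (γ + z) := by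
  rcases lt_or_ge z 0 with hz | hz
  · rw [P.weight_eq_zero_of_neg hγ _ hz, P.weight_eq_zero_of_neg hγ _ hz, zero_mul]
  refine P.weight_succ_mul_eval_stepPoly (ne_of_gt ?_)
  have hαγ : 0 < P.α + γ - P.γ₂ := by
    rcases hγ with rfl | rfl <;> simp only [max_lt_iff] at hα <;> linarith
  have hz' : (0 : ℝ) ≤ z := by exact_mod_cast hz
  have hk' : (k : ℝ) + 1 ≤ P.n := by exact_mod_cast hk
  linarith

theorem weight_succ_mul_eval_shiftPoly_lattice (hβ : ∀ m : ℕ, P.β ≠ -(m : ℝ))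
    (hβγ : ∀ m : ℕ, P.β - P.γ₁ + P.γ₂ ≠ -(m : ℝ)) (hγ : γ = P.γ₁ ∨ γ = P.γ₂) {k : ℕ}
    (hk : k < P.n) (z : ℤ) :
    P.weight (k + 1) (γ + z) * P.shiftPoly.eval (γ + z) = -P.weight k (γ + z - 1) := by
  rcases le_or_gt z P.N with hz | hz
  · refine P.weight_succ_mul_eval_shiftPoly fun hB => ?_
    have hm : ((P.N - z).toNat : ℝ) = P.N - z := by
      exact_mod_cast Int.toNat_of_nonneg (by omega)
    rcases hγ with rfl | rfl
    · exact hβγ (P.N - z).toNat (by rw [hm]; linarith)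
    · exact hβ (P.N - z).toNat (by rw [hm]; linarith)
  · rw [P.weight_eq_zero_of_lt hγ _ (by omega), show γ + z - 1 = γ + ((z - 1 : ℤ) : ℝ) by
      push_cast; ring, P.weight_eq_zero_of_lt hγ _ (by omega), zero_mul, neg_zero]

theorem binomShiftSum_weight_zero (hα : max 0 (P.γ₂ - P.γ₁) < P.α)
    (hβ : ∀ m : ℕ, P.β ≠ -(m : ℝ)) (hβγ : ∀ m : ℕ, P.β - P.γ₁ + P.γ₂ ≠ -(m : ℝ))
    (hγ : γ = P.γ₁ ∨ γ = P.γ₂) {k : ℕ} (hk : k ≤ P.n) (z : ℤ) :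
    binomShiftSum k (P.weight 0) (γ + z) = P.weight k (γ + z) * P.rodriguesSum k (γ + z) := by
  induction k generalizing z with
  | zero => simp [binomShiftSum, rodriguesSum, descProd, ascProd]
  | succ k ih =>
    have hz : γ + z - 1 = γ + ((z - 1 : ℤ) : ℝ) := by push_cast; ring
    rw [binomShiftSum_succ, ih (by omega), hz, ih (by omega), ← hz, rodriguesSum_succ,
      ← P.weight_succ_mul_eval_stepPoly_lattice hα hγ hk z,
      ← neg_neg (P.weight k (γ + z - 1)),
      ← P.weight_succ_mul_eval_shiftPoly_lattice hβ hβγ hγ hk z]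
    ring

theorem sum_rodriguesSum_mul_pow_mul_weight_eq_zero (hα : max 0 (P.γ₂ - P.γ₁) < P.α)
    (hβ : ∀ m : ℕ, P.β ≠ -(m : ℝ)) (hβγ : ∀ m : ℕ, P.β - P.γ₁ + P.γ₂ ≠ -(m : ℝ))
    (hnN : P.n ≤ P.N) (hγ : γ = P.γ₁ ∨ γ = P.γ₂) {k : ℕ} (hk : k < P.n) :
    ∑ m ∈ range (P.N + 1),
      P.rodriguesSum P.n (γ + m) * (γ + m) ^ k * (-1) ^ m * P.weight P.n (γ + m) = 0 := by
  have hshift (m l : ℕ) : γ + m - l = γ + ((m - l : ℤ) : ℝ) := by push_cast; ring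
  calc ∑ m ∈ range (P.N + 1),
        P.rodriguesSum P.n (γ + m) * (γ + m) ^ k * (-1) ^ m * P.weight P.n (γ + m)
      = ∑ l ∈ range (P.n + 1), ∑ m ∈ range (P.N + 1),
          (P.n.choose l : ℝ) * P.weight 0 (γ + m - l) * ((-1) ^ m * (γ + m) ^ k) := by
        rw [sum_comm]
        refine sum_congr rfl fun m _ => ?_
        have h := P.binomShiftSum_weight_zero hα hβ hβγ hγ le_rfl m
        rw [Int.cast_natCast, binomShiftSum] at h
        rw [← sum_mul, h]
        ring
    _ = ∑ l ∈ range (P.n + 1), ∑ u ∈ range (P.N - P.n + 1),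
          (P.n.choose l : ℝ) * P.weight 0 (γ + u) * ((-1) ^ (l + u) * (γ + u + l) ^ k) := by
        refine sum_congr rfl fun l hl => ?_
        rw [sum_range_eq_sum_range_add_of_eq_zero _ (N := P.N) (l := l) (L := P.N - P.n)
          (by have := mem_range.1 hl; omega)
          (fun m hm => by rw [hshift, P.weight_eq_zero_of_neg hγ _ (by omega)]; ring)
          (fun m hm => by rw [hshift, P.weight_eq_zero_of_lt hγ _ (by omega)]; ring)]
        refine sum_congr rfl fun u _ => ?_
        push_cast
        ring_nf
    _ = ∑ u ∈ range (P.N - P.n + 1), (-1) ^ u * P.weight 0 (γ + u) *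
          ∑ l ∈ range (P.n + 1), (-1) ^ l * (P.n.choose l : ℝ) * (γ + u + l) ^ k := by
        rw [sum_comm]
        refine sum_congr rfl fun u _ => ?_
        rw [mul_sum]
        refine sum_congr rfl fun l _ => ?_
        ring
    _ = 0 := sum_eq_zero fun u _ => by
        rw [sum_range_neg_one_pow_mul_choose_mul_pow_eq_zero hk, mul_zero]

end KravchukHahnData

theorem stmt_13_general (N n : ℕ) (hnN : n ≤ N) (α β γ₁ γ₂ : ℝ)
    (hα : α > max 0 (γ₂ - γ₁))
    (hβ : ∀ m : ℕ, β ≠ -(m : ℝ)) (hβγ : ∀ m : ℕ, β - γ₁ + γ₂ ≠ -(m : ℝ))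
    (hMD2 : ∀ z : ℤ, (z = (N : ℤ) ∨ (3 - 2 * (N : ℤ) ≤ z ∧ z ≤ (N : ℤ) - 2)) →
      α + β ≠ (z : ℝ))
    (G : ℝ → ℝ)
    (hG : ∀ x : ℝ, G x = Real.Gamma (α + x - γ₂) * Real.Gamma (β + N - x + γ₂) /
      (Real.Gamma α * Real.Gamma β * Real.Gamma (x - γ₁ + 1) *
        Real.Gamma ((N : ℝ) - x + γ₁ + 1) * Real.Gamma (x - γ₂ + 1) *
          Real.Gamma ((N : ℝ) - x + γ₂ + 1)))
    (Q : ℝ → ℝ)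
    (hQ : ∀ x : ℝ, Q x = ∑ j ∈ Finset.range (n + 1),
      (n.choose j : ℝ) *
        (∏ i ∈ Finset.range j,
          ((x - γ₁ - (i : ℝ)) * (x - γ₂ - (i : ℝ)) * (β + (N : ℝ) - x + γ₂ + (i : ℝ)))) *
        ∏ i ∈ Finset.range (n - j),
          (((N : ℝ) - x + γ₁ - (i : ℝ)) * (x - γ₂ + α + (i : ℝ)) *
            ((N : ℝ) - x + γ₂ - (i : ℝ)))) :
    (∃ p : Polynomial ℝ, p.degree = (2 * n : ℕ) ∧ ∀ x : ℝ, Q x = p.eval x) ∧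
    (∀ k : ℕ, k < n →
      ∑ m ∈ Finset.range (N + 1),
        Q (γ₁ + m) * (γ₁ + m) ^ k * (-1 : ℝ) ^ m * G (γ₁ + m) = 0 ∧
      ∑ m ∈ Finset.range (N + 1),
        Q (γ₂ + m) * (γ₂ + m) ^ k * (-1 : ℝ) ^ m * G (γ₂ + m) = 0) := by
  let P : KravchukHahnData := ⟨α, β, γ₁, γ₂, N, n⟩
  have hQP (x : ℝ) : Q x = P.rodriguesSum n x := by
    rw [hQ, KravchukHahnData.rodriguesSum]
    refine sum_congr rfl fun j _ => ?_
    simp only [KravchukHahnData.descProd, KravchukHahnData.ascProd,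
      KravchukHahnData.eval_shiftPoly, KravchukHahnData.eval_stepPoly, P]
    rw [mul_assoc]
    congr 2 <;> refine prod_congr rfl fun i _ => by ring
  have hGP (x : ℝ) : G x = P.weight n x := by
    simp only [hG, KravchukHahnData.weight, P, add_sub_cancel_right, sub_add_cancel]
  obtain ⟨hdeg, hcoeff⟩ := P.natDegree_rodriguesPoly_le_and_coeff n
  refine ⟨⟨P.rodriguesPoly n, degree_eq_of_le_of_coeff_ne_zero (degree_le_of_natDegree_le hdeg)
    (hcoeff ▸ P.leadProd_ne_zero hnN hMD2), fun x => by rw [hQP, P.eval_rodriguesPoly]⟩,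
    fun k hk => ⟨?_, ?_⟩⟩ <;> simp only [hQP, hGP]
  · exact P.sum_rodriguesSum_mul_pow_mul_weight_eq_zero hα hβ hβγ hnN (Or.inl rfl) hk
  · exact P.sum_rodriguesSum_mul_pow_mul_weight_eq_zero hα hβ hβγ hnN (Or.inr rfl) hk

/-- The paper's Kravchuk–Hahn I family under condition (a) with `N₁ = N₂ = N` and
Condition MD2: the polynomial `Q` (equal to `(α)_n(β)_n` times the Rodrigues polynomial)
collapses to degree exactly `2n`, and it is orthogonal to `x^k`, `k < n`, with respect to
the signed measures `(−1)^m G(γ_j + m)` on both shifted lattices. -/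
theorem stmt_13 (N n : ℕ) (hN : 1 ≤ N) (hnN : n ≤ N) (α β γ₁ γ₂ : ℝ)
    (hγ0 : 0 < |γ₁ - γ₂|) (hγ1 : |γ₁ - γ₂| < 1)
    (hα : α > max 0 (γ₂ - γ₁)) (hβN : -β - N > max 0 (γ₂ - γ₁))
    (hβ : ∀ m : ℕ, β ≠ -(m : ℝ)) (hβγ : ∀ m : ℕ, β - γ₁ + γ₂ ≠ -(m : ℝ))
    (hMD2 : ∀ z : ℤ, (z = (N : ℤ) ∨ (3 - 2 * (N : ℤ) ≤ z ∧ z ≤ (N : ℤ) - 2)) →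
      α + β ≠ (z : ℝ))
    (G : ℝ → ℝ)
    (hG : ∀ x : ℝ, G x = Real.Gamma (α + x - γ₂) * Real.Gamma (β + N - x + γ₂) /
      (Real.Gamma α * Real.Gamma β * Real.Gamma (x - γ₁ + 1) *
        Real.Gamma ((N : ℝ) - x + γ₁ + 1) * Real.Gamma (x - γ₂ + 1) *
          Real.Gamma ((N : ℝ) - x + γ₂ + 1)))
    (Q : ℝ → ℝ)
    (hQ : ∀ x : ℝ, Q x = ∑ j ∈ Finset.range (n + 1),
      (n.choose j : ℝ) *
        (∏ i ∈ Finset.range j,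
          ((x - γ₁ - (i : ℝ)) * (x - γ₂ - (i : ℝ)) * (β + (N : ℝ) - x + γ₂ + (i : ℝ)))) *
        ∏ i ∈ Finset.range (n - j),
          (((N : ℝ) - x + γ₁ - (i : ℝ)) * (x - γ₂ + α + (i : ℝ)) *
            ((N : ℝ) - x + γ₂ - (i : ℝ)))) :
    (∃ p : Polynomial ℝ, p.degree = (2 * n : ℕ) ∧ ∀ x : ℝ, Q x = p.eval x) ∧
    (∀ k : ℕ, k < n →
      ∑ m ∈ Finset.range (N + 1),
        Q (γ₁ + m) * (γ₁ + m) ^ k * (-1 : ℝ) ^ m * G (γ₁ + m) = 0 ∧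
      ∑ m ∈ Finset.range (N + 1),
        Q (γ₂ + m) * (γ₂ + m) ^ k * (-1 : ℝ) ^ m * G (γ₂ + m) = 0) :=
  stmt_13_general N n hnN α β γ₁ γ₂ hα hβ hβγ hMD2 G hG Q hQ
end

section
/- Fix b > 0, N, n ∈ ℕ with n ≤ N, and γ_1, γ_2 ∈ ℝ with γ_1 − γ_2 > N and γ_1 − γ_2 not an integer. Define W_1(m) = (−b)^m / (m! · Γ(m + γ_1 − γ_2 + 1) · Γ(N − m − γ_1 + γ_2 + 1)) for m ∈ ℕ, W_2(m) = (−b)^m / (Γ(m + γ_2 − γ_1 + 1) · m! · (N − m)!) for 0 ≤ m ≤ N, and P : ℝ → ℝ by P(x) = Σ_{j=0}^{n} (−1)^j C(n,j) (−b)^(−j) · Π_{i=0}^{j−1} [(x − γ_1 − i)(x − γ_2 − i)] · Π_{i=0}^{n−j−1} (N − x + γ_2 − i). Then: (i) each of the two families of weights has constant sign, i.e. W_1(m)·W_1(m') > 0 for all m, m' ∈ ℕ and W_2(m)·W_2(m') > 0 for all 0 ≤ m, m' ≤ N; (ii) P is the evaluation of a real polynomial of degree exactly 2n; (iii) for every natural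 number k < n, the series Σ_{m=0}^{∞} P(γ_1 + m)(γ_1 + m)^k W_1(m) converges with sum 0, and Σ_{m=0}^{N} P(γ_2 + m)(γ_2 + m)^k W_2(m) = 0. -/
/-!
Everything rests on `1/Γ` being entire, which makes
`∏_{i<j} (y - i) / Γ(y + 1) = 1 / Γ(y + 1 - j)` hold for all real `y`. With `j = 1` it gives the
Pearson equation `(x+1-γ₁)(x+1-γ₂) G_M(x+1) = (M-x+γ₂) G_M(x)`, so consecutive weights on either
lattice differ by a positive factor (constant sign), and on the Charlier lattice by a factor
`O(b/s)` (convergence). For general `j` it turns the `j`-th summand of `P(x) (-b)ˣ G_N(x)` into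
`(-1)ʲ C(n,j) (-b)^{x-j} G_{N-n}(x-j)`: this is the Rodrigues formula `P w_N = ∇ⁿ w_{N-n}`.
Against `(γ+m)^k`, shifting the `j`-th term back by `j` (the weights `w_{N-n}` vanish to the left of
the lattice, and for Kravchuk also to the right) leaves `∑_s w_{N-n}(s) ∑_j (-1)ʲ C(n,j) (γ+s+j)^k`,
whose inner sum is an `n`-th difference of a polynomial of degree `k < n`.
-/

open Finset Polynomial Real
open scoped Nat

theorem Real.mul_inv_Gamma_add_one (z : ℝ) : z * (Gamma (z + 1))⁻¹ = (Gamma z)⁻¹ := by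
  rcases eq_or_ne z 0 with rfl | hz
  · simp
  · rw [Gamma_add_one hz, mul_inv, mul_inv_cancel_left₀ hz]

theorem Real.prod_sub_mul_inv_Gamma (y : ℝ) (j : ℕ) :
    (∏ i ∈ range j, (y - i)) * (Gamma (y + 1))⁻¹ = (Gamma (y + 1 - j))⁻¹ := by
  induction j with
  | zero => simp
  | succ j ih =>
    rw [prod_range_succ, mul_right_comm, ih, ← Real.mul_inv_Gamma_add_one (y + 1 - (j + 1 : ℕ))]
    push_cast
    ring_nf

theorem Real.inv_Gamma_intCast_of_nonpos {z : ℤ} (hz : z ≤ 0) : (Gamma z)⁻¹ = 0 := by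
  rw [inv_eq_zero, Gamma_eq_zero_iff]
  exact ⟨z.natAbs, by rw [Nat.cast_natAbs, abs_of_nonpos hz]; push_cast; ring⟩

theorem mul_pos_of_forall_mul_succ_eq {f : ℕ → ℝ} {M : ℕ} (h₀ : f 0 ≠ 0)
    (hf : ∀ m < M, ∃ p > 0, ∃ q > 0, p * f (m + 1) = q * f m) {m m' : ℕ} (hm : m ≤ M)
    (hm' : m' ≤ M) : 0 < f m * f m' := by
  have key : ∀ m ≤ M, 0 < f m * f 0 := by
    intro m
    induction m with
    | zero => exact fun _ => mul_self_pos.mpr h₀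
    | succ m ih =>
      intro hm
      obtain ⟨p, hp, q, hq, h⟩ := hf m hm
      refine pos_of_mul_pos_right (a := p) ?_ hp.le
      rw [← mul_assoc, h, mul_assoc]
      exact mul_pos hq (ih (by omega))
  have h := mul_pos (key m hm) (key m' hm')
  rw [mul_mul_mul_comm] at h
  exact pos_of_mul_pos_left h (mul_self_nonneg _)

theorem abs_le_mul_pow_div_factorial {f : ℕ → ℝ} {B : ℝ} (hB : 0 ≤ B)
    (h : ∀ s : ℕ, (s + 1) * |f (s + 1)| ≤ B * |f s|) (s : ℕ) : |f s| ≤ |f 0| * (B ^ s / s !) := by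
  induction s with
  | zero => simp
  | succ s ih =>
    have hs : (0 : ℝ) < s + 1 := by positivity
    rw [← mul_le_mul_iff_of_pos_left hs]
    calc (s + 1) * |f (s + 1)| ≤ B * |f s| := h s
      _ ≤ B * (|f 0| * (B ^ s / s !)) := by gcongr
      _ = (s + 1) * (|f 0| * (B ^ (s + 1) / (s + 1)!)) := by
        rw [Nat.factorial_succ]; push_cast; field_simp; ring

theorem summable_add_pow_mul_pow_div_factorial {A B : ℝ} (hA : 0 ≤ A) (hB : 0 ≤ B) (k : ℕ) :
    Summable fun s : ℕ => (A + s) ^ k * (B ^ s / s !) := by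
  refine ((Real.summable_pow_div_factorial (exp 1 * B)).mul_left (k ! * exp A)).of_nonneg_of_le
    (fun s => by positivity) fun s => ?_
  have hpow : (A + s) ^ k ≤ k ! * (exp A * exp 1 ^ s) := by
    rw [exp_one_pow, ← exp_add, ← div_le_iff₀' (by positivity)]
    exact Real.pow_div_factorial_le_exp _ (by positivity) k
  calc (A + s) ^ k * (B ^ s / s !) ≤ k ! * (exp A * exp 1 ^ s) * (B ^ s / s !) := by gcongr
    _ = k ! * exp A * ((exp 1 * B) ^ s / s !) := by ring

theorem sum_range_alternating_choose_mul_pow_eq_zero {k n : ℕ} (hk : k < n) (x : ℝ) :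
    ∑ j ∈ range (n + 1), (-1) ^ j * n.choose j * (x + j) ^ k = 0 := by
  have h := congr_fun (fwdDiff_iter_pow_eq_zero_of_lt (R := ℝ) hk) x
  rw [fwdDiff_iter_eq_sum_shift] at h
  simp only [zsmul_eq_mul, nsmul_eq_mul, mul_one, Pi.zero_apply] at h
  rw [← mul_eq_zero_of_right ((-1 : ℝ) ^ n) h, mul_sum]
  refine sum_congr rfl fun j hj => ?_
  obtain ⟨d, rfl⟩ := Nat.exists_eq_add_of_le (Nat.lt_succ_iff.mp (mem_range.mp hj))
  have hsq : ((-1 : ℝ) ^ d) ^ 2 = 1 := by rw [← pow_mul, pow_mul']; simp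
  rw [Nat.add_sub_cancel_left]
  push_cast
  linear_combination (-(-1) ^ j * (j + d).choose j * (x + j) ^ k) * hsq

/-- The paper's `∇ⁿ`, acting on functions of the lattice coordinate `s` of `γ + s`. -/
def iterBwdDiff (n : ℕ) (ψ : ℤ → ℝ) (m : ℤ) : ℝ :=
  ∑ j ∈ range (n + 1), (-1) ^ j * n.choose j * ψ (m - j)

theorem hasSum_mul_shift {ψ : ℤ → ℝ} (hψ : ∀ s < 0, ψ s = 0) {u : ℕ → ℝ} {S : ℝ}
    (j : ℕ) (h : HasSum (fun s : ℕ => u (s + j) * ψ s) S) :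
    HasSum (fun m : ℕ => u m * ψ (m - j)) S := by
  rw [← hasSum_nat_add_iff' j, sum_eq_zero, sub_zero]
  · simpa using h
  · intro m hm
    rw [hψ _ (by simpa using mem_range.mp hm), mul_zero]

theorem hasSum_pow_mul_iterBwdDiff_eq_zero {ψ : ℤ → ℝ} (hψ : ∀ s < 0, ψ s = 0) (a : ℝ)
    {k n : ℕ} (hk : k < n) (hsum : ∀ j : ℕ, Summable fun s : ℕ => (a + j + s) ^ k * ψ s) :
    HasSum (fun m : ℕ => (a + m) ^ k * iterBwdDiff n ψ m) 0 := by
  have hterm : ∀ j ∈ range (n + 1),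
      HasSum (fun m : ℕ => (-1) ^ j * n.choose j * ((a + m) ^ k * ψ (m - j)))
        ((-1) ^ j * n.choose j * ∑' s : ℕ, (a + j + s) ^ k * ψ s) := by
    intro j _
    refine (hasSum_mul_shift hψ j ?_).mul_left _
    convert (hsum j).hasSum using 3 with s
    push_cast
    ring
  have hzero :
      ∑ j ∈ range (n + 1), (-1) ^ j * n.choose j * ∑' s : ℕ, (a + j + s) ^ k * ψ s = 0 := by
    simp_rw [← tsum_mul_left]
    rw [← Summable.tsum_finsetSum fun j _ => (hsum j).mul_left _]
    refine (tsum_congr fun s => ?_).trans tsum_zero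
    calc _ = (∑ j ∈ range (n + 1), (-1) ^ j * n.choose j * (a + s + j) ^ k) * ψ s := by
          rw [sum_mul]
          exact sum_congr rfl fun j _ => by ring
      _ = 0 := by rw [sum_range_alternating_choose_mul_pow_eq_zero hk, zero_mul]
  rw [← hzero]
  convert hasSum_sum hterm using 1
  ext m
  rw [iterBwdDiff, mul_sum]
  refine sum_congr rfl fun j _ => by ring

namespace CharlierKravchuk

/-- `G_M(x)` of the paper. `1/Γ` is read as the entire function: Lean's `Γ` vanishes at the
poles, so `(Γ x)⁻¹ = 0` there. -/
noncomputable def G (γ₁ γ₂ M x : ℝ) : ℝ :=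
  (Gamma (x - γ₁ + 1))⁻¹ * (Gamma (x - γ₂ + 1))⁻¹ * (Gamma (M - x + γ₂ + 1))⁻¹

theorem G_add_one (γ₁ γ₂ M x : ℝ) :
    (x + 1 - γ₁) * (x + 1 - γ₂) * G γ₁ γ₂ M (x + 1) = (M - x + γ₂) * G γ₁ γ₂ M x := by
  have h₁ : (x + 1 - γ₁) * (Gamma (x + 1 - γ₁ + 1))⁻¹ = (Gamma (x - γ₁ + 1))⁻¹ := by
    rw [mul_inv_Gamma_add_one]; ring_nf
  have h₂ : (x + 1 - γ₂) * (Gamma (x + 1 - γ₂ + 1))⁻¹ = (Gamma (x - γ₂ + 1))⁻¹ := by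
    rw [mul_inv_Gamma_add_one]; ring_nf
  have h₃ : (M - x + γ₂) * (Gamma (M - x + γ₂ + 1))⁻¹ = (Gamma (M - (x + 1) + γ₂ + 1))⁻¹ := by
    rw [mul_inv_Gamma_add_one]; ring_nf
  unfold G
  linear_combination (x + 1 - γ₂) * (Gamma (x + 1 - γ₂ + 1))⁻¹ *
      (Gamma (M - (x + 1) + γ₂ + 1))⁻¹ * h₁ +
    (Gamma (x - γ₁ + 1))⁻¹ * (Gamma (M - (x + 1) + γ₂ + 1))⁻¹ * h₂ -
    (Gamma (x - γ₁ + 1))⁻¹ * (Gamma (x - γ₂ + 1))⁻¹ * h₃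

theorem prod_mul_G (γ₁ γ₂ M x : ℝ) {n j : ℕ} (hj : j ≤ n) :
    (∏ i ∈ range j, (x - γ₁ - i) * (x - γ₂ - i)) * (∏ i ∈ range (n - j), (M - x + γ₂ - i)) *
      G γ₁ γ₂ M x = G γ₁ γ₂ (M - n) (x - j) := by
  have h₁ := prod_sub_mul_inv_Gamma (x - γ₁) j
  have h₂ := prod_sub_mul_inv_Gamma (x - γ₂) j
  have h₃ := prod_sub_mul_inv_Gamma (M - x + γ₂) (n - j)
  rw [Nat.cast_sub hj] at h₃
  unfold G
  rw [prod_mul_distrib, show x - j - γ₁ + 1 = x - γ₁ + 1 - j by ring,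
    show x - j - γ₂ + 1 = x - γ₂ + 1 - j by ring,
    show M - n - (x - j) + γ₂ + 1 = M - x + γ₂ + 1 - (n - j) by ring, ← h₁, ← h₂, ← h₃]
  ring

noncomputable def rodriguesTerm (b γ₁ γ₂ M : ℝ) (n j : ℕ) : ℝ[X] :=
  C ((-1) ^ j * n.choose j * (-b) ^ (-(j : ℤ))) *
    (∏ i ∈ range j, (X - C (γ₁ + i)) * (X - C (γ₂ + i))) * ∏ i ∈ range (n - j), (C (M + γ₂ - i) - X)

noncomputable def rodriguesPoly (b γ₁ γ₂ M : ℝ) (n : ℕ) : ℝ[X] :=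
  ∑ j ∈ range (n + 1), rodriguesTerm b γ₁ γ₂ M n j

theorem monic_prod_pairs (γ₁ γ₂ : ℝ) (j : ℕ) :
    (∏ i ∈ range j, (X - C (γ₁ + i)) * (X - C (γ₂ + i))).Monic :=
  monic_prod_of_monic _ _ fun _ _ => (monic_X_sub_C _).mul (monic_X_sub_C _)

theorem natDegree_prod_pairs (γ₁ γ₂ : ℝ) (j : ℕ) :
    (∏ i ∈ range j, (X - C (γ₁ + i)) * (X - C (γ₂ + i))).natDegree = 2 * j := by
  rw [natDegree_prod_of_monic _ _ fun _ _ => (monic_X_sub_C _).mul (monic_X_sub_C _)]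
  simp only [natDegree_mul (X_sub_C_ne_zero _) (X_sub_C_ne_zero _), natDegree_X_sub_C, sum_const,
    card_range, smul_eq_mul]
  ring

theorem natDegree_prod_C_sub_X_le (r : ℕ → ℝ) (d : ℕ) :
    (∏ i ∈ range d, (C (r i) - X)).natDegree ≤ d := by
  refine (natDegree_prod_le _ _).trans
    ((sum_le_sum (g := fun _ => 1) fun i _ => ?_).trans_eq (by simp))
  rw [natDegree_sub_eq_right_of_natDegree_lt] <;> simp

theorem degree_rodriguesTerm_self {b : ℝ} (hb : b ≠ 0) (γ₁ γ₂ M : ℝ) (n : ℕ) :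
    (rodriguesTerm b γ₁ γ₂ M n n).degree = (2 * n : ℕ) := by
  rw [rodriguesTerm, Nat.sub_self, prod_range_zero, mul_one, degree_C_mul (by simp [hb]),
    degree_eq_natDegree (monic_prod_pairs γ₁ γ₂ n).ne_zero, natDegree_prod_pairs]

theorem degree_rodriguesTerm_lt (b γ₁ γ₂ M : ℝ) {n j : ℕ} (hj : j < n) :
    (rodriguesTerm b γ₁ γ₂ M n j).degree < (2 * n : ℕ) := by
  have hdeg : (rodriguesTerm b γ₁ γ₂ M n j).natDegree < 2 * n := by
    refine natDegree_mul_le.trans_lt ?_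
    have hA := (natDegree_C_mul_le ((-1) ^ j * n.choose j * (-b) ^ (-(j : ℤ))) _).trans
      (natDegree_prod_pairs γ₁ γ₂ j).le
    have hB := natDegree_prod_C_sub_X_le (fun i : ℕ => M + γ₂ - i) (n - j)
    omega
  exact degree_le_natDegree.trans_lt (by exact_mod_cast hdeg)

theorem degree_rodriguesPoly {b : ℝ} (hb : b ≠ 0) (γ₁ γ₂ M : ℝ) (n : ℕ) :
    (rodriguesPoly b γ₁ γ₂ M n).degree = (2 * n : ℕ) := by
  rw [rodriguesPoly, sum_range_succ, degree_add_eq_right_of_degree_lt] <;>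
    rw [degree_rodriguesTerm_self hb]
  exact (degree_sum_le _ _).trans_lt ((Finset.sup_lt_iff (WithBot.bot_lt_coe _)).2
    fun j hj => degree_rodriguesTerm_lt b γ₁ γ₂ M (mem_range.1 hj))

theorem eval_rodriguesPoly (b γ₁ γ₂ M : ℝ) (n : ℕ) (x : ℝ) :
    (rodriguesPoly b γ₁ γ₂ M n).eval x = ∑ j ∈ range (n + 1),
      (-1) ^ j * n.choose j * (-b) ^ (-(j : ℤ)) *
        (∏ i ∈ range j, (x - γ₁ - i) * (x - γ₂ - i)) * ∏ i ∈ range (n - j), (M - x + γ₂ - i) := by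
  simp only [rodriguesPoly, rodriguesTerm, eval_finsetSum, eval_mul, eval_C, eval_prod, eval_sub,
    eval_X]
  refine sum_congr rfl fun j _ => ?_
  congr 1
  · congr 1
    exact prod_congr rfl fun i _ => by ring
  · exact prod_congr rfl fun i _ => by ring

/-- With `M = N` and `γ = γⱼ` this is the paper's `Wⱼ` (see `latticeWeight_charlier_natCast`,
`latticeWeight_kravchuk_natCast`); the index is an integer so that `∇ⁿ` may shift it below `0`. -/
noncomputable def latticeWeight (b γ₁ γ₂ M γ : ℝ) (s : ℤ) : ℝ :=
  (-b) ^ s * G γ₁ γ₂ M (γ + s)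

theorem eval_rodriguesPoly_mul_latticeWeight {b : ℝ} (hb : b ≠ 0) (γ₁ γ₂ M γ : ℝ) (n m : ℕ) :
    (rodriguesPoly b γ₁ γ₂ M n).eval (γ + m) * latticeWeight b γ₁ γ₂ M γ m =
      iterBwdDiff n (latticeWeight b γ₁ γ₂ (M - n) γ) m := by
  rw [eval_rodriguesPoly, iterBwdDiff, sum_mul]
  refine sum_congr rfl fun j hj => ?_
  have hjn : j ≤ n := Nat.lt_succ_iff.mp (mem_range.mp hj)
  rw [latticeWeight, latticeWeight, Int.cast_sub, Int.cast_natCast, Int.cast_natCast,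
    ← add_sub_assoc, ← prod_mul_G γ₁ γ₂ M _ hjn, zpow_sub₀ (neg_ne_zero.mpr hb), zpow_neg,
    zpow_natCast, zpow_natCast]
  ring

theorem latticeWeight_add_one {b : ℝ} (hb : b ≠ 0) (γ₁ γ₂ M γ : ℝ) (s : ℤ) :
    (γ + s + 1 - γ₁) * (γ + s + 1 - γ₂) * latticeWeight b γ₁ γ₂ M γ (s + 1) =
      -b * (M - (γ + s) + γ₂) * latticeWeight b γ₁ γ₂ M γ s := by
  rw [latticeWeight, latticeWeight, zpow_add_one₀ (neg_ne_zero.mpr hb), Int.cast_add, Int.cast_one,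
    ← add_assoc]
  linear_combination (-b) ^ s * (-b) * G_add_one γ₁ γ₂ M (γ + s)

theorem latticeWeight_charlier_succ {b : ℝ} (hb : b ≠ 0) (γ₁ γ₂ M : ℝ) (s : ℕ) :
    (s + 1) * (s + 1 + (γ₁ - γ₂)) * latticeWeight b γ₁ γ₂ M γ₁ (s + 1 : ℕ) =
      -b * (M - s - (γ₁ - γ₂)) * latticeWeight b γ₁ γ₂ M γ₁ s := by
  push_cast
  linear_combination latticeWeight_add_one hb γ₁ γ₂ M γ₁ s

theorem latticeWeight_kravchuk_succ {b : ℝ} (hb : b ≠ 0) (γ₁ γ₂ M : ℝ) (s : ℕ) :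
    (s + 1 - (γ₁ - γ₂)) * (s + 1) * latticeWeight b γ₁ γ₂ M γ₂ (s + 1 : ℕ) =
      -b * (M - s) * latticeWeight b γ₁ γ₂ M γ₂ s := by
  push_cast
  linear_combination latticeWeight_add_one hb γ₁ γ₂ M γ₂ s

theorem latticeWeight_charlier_of_neg (b γ₁ γ₂ M : ℝ) {s : ℤ} (hs : s < 0) :
    latticeWeight b γ₁ γ₂ M γ₁ s = 0 := by
  rw [latticeWeight, G, add_sub_cancel_left, ← Int.cast_one, ← Int.cast_add,
    inv_Gamma_intCast_of_nonpos (by omega)]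
  ring

theorem latticeWeight_kravchuk_of_neg (b γ₁ γ₂ M : ℝ) {s : ℤ} (hs : s < 0) :
    latticeWeight b γ₁ γ₂ M γ₂ s = 0 := by
  rw [latticeWeight, G, add_sub_cancel_left, ← Int.cast_one, ← Int.cast_add,
    inv_Gamma_intCast_of_nonpos (by omega)]
  ring

theorem latticeWeight_kravchuk_of_lt (b γ₁ γ₂ : ℝ) {L s : ℤ} (hs : L < s) :
    latticeWeight b γ₁ γ₂ L γ₂ s = 0 := by
  rw [latticeWeight, G, show (L : ℝ) - (γ₂ + s) + γ₂ + 1 = ((L - s + 1 : ℤ) : ℝ) by push_cast; ring,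
    inv_Gamma_intCast_of_nonpos (by omega)]
  ring

theorem latticeWeight_charlier_natCast (b γ₁ γ₂ M : ℝ) (m : ℕ) :
    latticeWeight b γ₁ γ₂ M γ₁ m =
      (-b) ^ m / (m ! * Gamma (m + γ₁ - γ₂ + 1) * Gamma (M - m - γ₁ + γ₂ + 1)) := by
  rw [latticeWeight, G, zpow_natCast, Int.cast_natCast, add_sub_cancel_left, Gamma_nat_eq_factorial]
  field_simp
  ring_nf

theorem latticeWeight_kravchuk_natCast (b γ₁ γ₂ : ℝ) {N m : ℕ} (hm : m ≤ N) :
    latticeWeight b γ₁ γ₂ N γ₂ m =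
      (-b) ^ m / (Gamma (m + γ₂ - γ₁ + 1) * m ! * (N - m)!) := by
  rw [latticeWeight, G, zpow_natCast, Int.cast_natCast, add_sub_cancel_left, Gamma_nat_eq_factorial,
    show (N : ℝ) - (γ₂ + m) + γ₂ + 1 = (N - m : ℕ) + 1 by push_cast [hm]; ring,
    Gamma_nat_eq_factorial]
  field_simp
  ring_nf

theorem latticeWeight_charlier_mul_pos {b : ℝ} (hb : 0 < b) {γ₁ γ₂ : ℝ} {N : ℕ}
    (hN : N < γ₁ - γ₂) (hZ : ∀ z : ℤ, γ₁ - γ₂ ≠ z) (m m' : ℕ) :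
    0 < latticeWeight b γ₁ γ₂ N γ₁ m * latticeWeight b γ₁ γ₂ N γ₁ m' := by
  refine mul_pos_of_forall_mul_succ_eq (f := fun s : ℕ => latticeWeight b γ₁ γ₂ N γ₁ s)
    (M := max m m') ?_ (fun s _ => ?_) (le_max_left _ _) (le_max_right _ _)
  · have hc : 0 < γ₁ - γ₂ := (Nat.cast_nonneg N).trans_lt hN
    rw [latticeWeight_charlier_natCast]
    refine div_ne_zero (by simp) (mul_ne_zero (mul_ne_zero (by simp) ?_) ?_)
    · exact (Gamma_pos_of_pos (by push_cast; linarith)).ne'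
    · exact Gamma_ne_zero fun k hk => hZ (N + 1 + k) (by push_cast at hk ⊢; linarith)
  · have hs : (0 : ℝ) ≤ s := s.cast_nonneg
    exact ⟨_, mul_pos (by positivity) (by linarith), _, mul_pos_of_neg_of_neg (by linarith)
      (by linarith), latticeWeight_charlier_succ hb.ne' γ₁ γ₂ N s⟩

theorem latticeWeight_kravchuk_mul_pos {b : ℝ} (hb : 0 < b) {γ₁ γ₂ : ℝ} {N : ℕ}
    (hN : N < γ₁ - γ₂) (hZ : ∀ z : ℤ, γ₁ - γ₂ ≠ z) {m m' : ℕ} (hm : m ≤ N) (hm' : m' ≤ N) :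
    0 < latticeWeight b γ₁ γ₂ N γ₂ m * latticeWeight b γ₁ γ₂ N γ₂ m' := by
  refine mul_pos_of_forall_mul_succ_eq (f := fun s : ℕ => latticeWeight b γ₁ γ₂ N γ₂ s)
    ?_ (fun s hs => ?_) hm hm'
  · rw [latticeWeight_kravchuk_natCast _ _ _ (Nat.zero_le N)]
    refine div_ne_zero (by simp) (mul_ne_zero (mul_ne_zero ?_ (by simp)) (by positivity))
    exact Gamma_ne_zero fun k hk => hZ (k + 1) (by push_cast at hk ⊢; linarith)
  · have hs : (s : ℝ) + 1 ≤ N := by exact_mod_cast hs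
    refine ⟨(γ₁ - γ₂ - s - 1) * (s + 1), mul_pos (by linarith) (by positivity), b * (N - s),
      mul_pos hb (by linarith), ?_⟩
    linear_combination -latticeWeight_kravchuk_succ hb.ne' γ₁ γ₂ N s

theorem summable_pow_mul_latticeWeight_charlier {b : ℝ} (hb : b ≠ 0) {γ₁ γ₂ : ℝ}
    (hγ : 0 ≤ γ₁ - γ₂) (M a : ℝ) (k : ℕ) :
    Summable fun s : ℕ => (a + s) ^ k * latticeWeight b γ₁ γ₂ M γ₁ s := by
  set w : ℕ → ℝ := fun s => latticeWeight b γ₁ γ₂ M γ₁ s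
  set B := |b| * (1 + |M|)
  have hratio : ∀ s : ℕ, (s + 1) * |w (s + 1)| ≤ B * |w s| := by
    intro s
    have hs : (0 : ℝ) ≤ s := s.cast_nonneg
    have hp : 0 < (s : ℝ) + 1 + (γ₁ - γ₂) := by linarith
    have hrec := congrArg abs (latticeWeight_charlier_succ hb γ₁ γ₂ M s)
    rw [abs_mul, abs_mul, abs_mul, abs_mul, abs_neg, abs_of_pos hp,
      abs_of_pos (by positivity : (0 : ℝ) < s + 1)] at hrec
    have hM : |M - s - (γ₁ - γ₂)| ≤ (1 + |M|) * (s + 1 + (γ₁ - γ₂)) :=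
      abs_le.2 ⟨by nlinarith [neg_abs_le M, abs_nonneg M],
        by nlinarith [le_abs_self M, abs_nonneg M]⟩
    refine le_of_mul_le_mul_right ?_ hp
    calc (s + 1) * |w (s + 1)| * (s + 1 + (γ₁ - γ₂)) = |b| * |M - s - (γ₁ - γ₂)| * |w s| := by
          rw [← hrec]; ring
      _ ≤ |b| * ((1 + |M|) * (s + 1 + (γ₁ - γ₂))) * |w s| := by gcongr
      _ = B * |w s| * (s + 1 + (γ₁ - γ₂)) := by ring
  have hbound := abs_le_mul_pow_div_factorial (by positivity) hratio
  refine Summable.of_norm_bounded ((summable_add_pow_mul_pow_div_factorial (abs_nonneg a)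
    (by positivity : 0 ≤ B) k).mul_left |w 0|) fun s => ?_
  rw [norm_mul, norm_pow, Real.norm_eq_abs, Real.norm_eq_abs]
  calc |a + s| ^ k * |w s| ≤ (|a| + s) ^ k * (|w 0| * (B ^ s / s !)) := by
        gcongr
        · exact (abs_add_le _ _).trans_eq (by rw [Nat.abs_cast])
        · exact hbound s
    _ = |w 0| * ((|a| + s) ^ k * (B ^ s / s !)) := by ring

theorem hasSum_rodriguesPoly_charlier {b : ℝ} (hb : b ≠ 0) {γ₁ γ₂ : ℝ} (hγ : 0 ≤ γ₁ - γ₂)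
    (M : ℝ) {k n : ℕ} (hk : k < n) :
    HasSum (fun m : ℕ => (rodriguesPoly b γ₁ γ₂ M n).eval (γ₁ + m) * (γ₁ + m) ^ k *
      latticeWeight b γ₁ γ₂ M γ₁ m) 0 := by
  convert hasSum_pow_mul_iterBwdDiff_eq_zero
    (fun _ => latticeWeight_charlier_of_neg b γ₁ γ₂ (M - n)) γ₁ hk
    (fun j => summable_pow_mul_latticeWeight_charlier hb hγ (M - n) (γ₁ + j) k) using 2 with m
  rw [← eval_rodriguesPoly_mul_latticeWeight hb]
  ring

theorem sum_rodriguesPoly_kravchuk {b : ℝ} (hb : b ≠ 0) (γ₁ γ₂ : ℝ) (N n : ℕ) {k : ℕ}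
    (hk : k < n) :
    ∑ m ∈ range (N + 1), (rodriguesPoly b γ₁ γ₂ N n).eval (γ₂ + m) * (γ₂ + m) ^ k *
      latticeWeight b γ₁ γ₂ N γ₂ m = 0 := by
  set ψ := latticeWeight b γ₁ γ₂ (N - n) γ₂
  have hψ : ∀ s : ℤ, (N : ℤ) - n < s → ψ s = 0 := fun s hs => by
    simpa using latticeWeight_kravchuk_of_lt b γ₁ γ₂ hs
  have hsum : ∀ j : ℕ, Summable fun s : ℕ => (γ₂ + j + s) ^ k * ψ s := fun j =>
    summable_of_ne_finset_zero (s := range (N + 1)) fun s hs => by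
      rw [hψ s (by simp at hs; omega), mul_zero]
  have hsupp : ∀ m ∉ range (N + 1), (γ₂ + m) ^ k * iterBwdDiff n ψ m = 0 := fun m hm =>
    mul_eq_zero_of_right _ (sum_eq_zero fun j hj => by
      rw [hψ _ (by simp at hm hj; omega), mul_zero])
  calc _ = ∑ m ∈ range (N + 1), (γ₂ + m) ^ k * iterBwdDiff n ψ m :=
        sum_congr rfl fun m _ => by rw [← eval_rodriguesPoly_mul_latticeWeight hb]; ring
    _ = 0 := (hasSum_sum_of_ne_finset_zero hsupp).unique
        (hasSum_pow_mul_iterBwdDiff_eq_zero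
          (fun _ => latticeWeight_kravchuk_of_neg b γ₁ γ₂ _) γ₂ hk hsum)

end CharlierKravchuk

open CharlierKravchuk in
theorem stmt_14_general (b : ℝ) (hb : 0 < b) (N n : ℕ) (γ₁ γ₂ : ℝ)
    (hγN : γ₁ - γ₂ > N) (hγZ : ∀ z : ℤ, γ₁ - γ₂ ≠ (z : ℝ)) (W₁ W₂ : ℕ → ℝ)
    (hW₁ : ∀ m : ℕ, W₁ m = (-b) ^ m /
      ((m.factorial : ℝ) * Real.Gamma ((m : ℝ) + γ₁ - γ₂ + 1) *
        Real.Gamma ((N : ℝ) - m - γ₁ + γ₂ + 1)))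
    (hW₂ : ∀ m : ℕ, m ≤ N → W₂ m = (-b) ^ m /
      (Real.Gamma ((m : ℝ) + γ₂ - γ₁ + 1) * (m.factorial : ℝ) * ((N - m).factorial : ℝ)))
    (P : ℝ → ℝ)
    (hP : ∀ x : ℝ, P x = ∑ j ∈ Finset.range (n + 1),
      (-1 : ℝ) ^ j * (n.choose j : ℝ) * (-b) ^ (-(j : ℤ)) *
        (∏ i ∈ Finset.range j, ((x - γ₁ - (i : ℝ)) * (x - γ₂ - (i : ℝ)))) *
        ∏ i ∈ Finset.range (n - j), ((N : ℝ) - x + γ₂ - (i : ℝ))) :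
    (∀ m m' : ℕ, 0 < W₁ m * W₁ m') ∧
    (∀ m m' : ℕ, m ≤ N → m' ≤ N → 0 < W₂ m * W₂ m') ∧
    (∃ p : Polynomial ℝ, p.degree = (2 * n : ℕ) ∧ ∀ x : ℝ, P x = p.eval x) ∧
    (∀ k : ℕ, k < n →
      HasSum (fun m : ℕ => P (γ₁ + m) * (γ₁ + m) ^ k * W₁ m) 0 ∧
      ∑ m ∈ Finset.range (N + 1), P (γ₂ + m) * (γ₂ + m) ^ k * W₂ m = 0) := by
  have hW₁' : ∀ m : ℕ, W₁ m = latticeWeight b γ₁ γ₂ N γ₁ m := fun m => by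
    rw [hW₁, latticeWeight_charlier_natCast]
  have hW₂' : ∀ m ≤ N, W₂ m = latticeWeight b γ₁ γ₂ N γ₂ m := fun m hm => by
    rw [hW₂ m hm, latticeWeight_kravchuk_natCast _ _ _ hm]
  have hP' : P = (rodriguesPoly b γ₁ γ₂ N n).eval :=
    funext fun x => (hP x).trans (eval_rodriguesPoly b γ₁ γ₂ N n x).symm
  refine ⟨fun m m' => ?_, fun m m' hm hm' => ?_, ⟨_, degree_rodriguesPoly hb.ne' γ₁ γ₂ N n,
    fun x => by rw [hP']⟩, fun k hk => ⟨?_, ?_⟩⟩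
  · rw [hW₁', hW₁']
    exact latticeWeight_charlier_mul_pos hb hγN hγZ m m'
  · rw [hW₂' m hm, hW₂' m' hm']
    exact latticeWeight_kravchuk_mul_pos hb hγN hγZ hm hm'
  · simp_rw [hP', hW₁']
    exact hasSum_rodriguesPoly_charlier hb.ne' (by linarith [Nat.cast_nonneg (α := ℝ) N]) N hk
  · rw [hP', ← sum_rodriguesPoly_kravchuk hb.ne' γ₁ γ₂ N n hk]
    exact sum_congr rfl fun m hm => by rw [hW₂' m (Nat.lt_succ_iff.mp (mem_range.mp hm))]

/-- The paper's Charlier–Kravchuk family (Case II, disjoint supports): the weights `W_1`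
on `γ₁ + ℤ₊` and `W_2` on `γ₂ + {0,…,N}` have constant sign, the Rodrigues polynomial `P`
has degree exactly `2n`, and `P` is orthogonal to `x^k`, `k < n`, with respect to both
discrete measures. -/
theorem stmt_14 (b : ℝ) (hb : 0 < b) (N n : ℕ) (hnN : n ≤ N) (γ₁ γ₂ : ℝ)
    (hγN : γ₁ - γ₂ > N) (hγZ : ∀ z : ℤ, γ₁ - γ₂ ≠ (z : ℝ)) (W₁ W₂ : ℕ → ℝ)
    (hW₁ : ∀ m : ℕ, W₁ m = (-b) ^ m /
      ((m.factorial : ℝ) * Real.Gamma ((m : ℝ) + γ₁ - γ₂ + 1) *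
        Real.Gamma ((N : ℝ) - m - γ₁ + γ₂ + 1)))
    (hW₂ : ∀ m : ℕ, m ≤ N → W₂ m = (-b) ^ m /
      (Real.Gamma ((m : ℝ) + γ₂ - γ₁ + 1) * (m.factorial : ℝ) * ((N - m).factorial : ℝ)))
    (P : ℝ → ℝ)
    (hP : ∀ x : ℝ, P x = ∑ j ∈ Finset.range (n + 1),
      (-1 : ℝ) ^ j * (n.choose j : ℝ) * (-b) ^ (-(j : ℤ)) *
        (∏ i ∈ Finset.range j, ((x - γ₁ - (i : ℝ)) * (x - γ₂ - (i : ℝ)))) *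
        ∏ i ∈ Finset.range (n - j), ((N : ℝ) - x + γ₂ - (i : ℝ))) :
    (∀ m m' : ℕ, 0 < W₁ m * W₁ m') ∧
    (∀ m m' : ℕ, m ≤ N → m' ≤ N → 0 < W₂ m * W₂ m') ∧
    (∃ p : Polynomial ℝ, p.degree = (2 * n : ℕ) ∧ ∀ x : ℝ, P x = p.eval x) ∧
    (∀ k : ℕ, k < n →
      HasSum (fun m : ℕ => P (γ₁ + m) * (γ₁ + m) ^ k * W₁ m) 0 ∧
      ∑ m ∈ Finset.range (N + 1), P (γ₂ + m) * (γ₂ + m) ^ k * W₂ m = 0) :=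
  stmt_14_general b hb N n γ₁ γ₂ hγN hγZ W₁ W₂ hW₁ hW₂ P hP
end

section
/- Fix b > 0 and real numbers α_1, α_2, γ_1, γ_2, and let R(x) = b^x · Γ(x − γ_1 + α_1) · Γ(x − γ_2 + α_2) / (Γ(x − γ_1 + 1) · Γ(x − γ_2 + 1)), where b^x is the real power. Then for every real x with x − γ_1 + α_1 ≠ 0, x − γ_2 + α_2 ≠ 0, x − γ_1 + 1 ≠ 0 and x − γ_2 + 1 ≠ 0, the difference Pearson equation holds: (x + 1 − γ_1)(x + 1 − γ_2) · R(x + 1) − (x − γ_1)(x − γ_2) · R(x) = [ b(x − γ_1 + α_1)(x − γ_2 + α_2) − (x − γ_1)(x − γ_2) ] · R(x). -/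
/-- The difference Pearson equation `Δ(σ(x)R(x)) = τ(x)R(x)` for the Meixner–Sorokin
weight `R(x) = b^x Γ(x−γ₁+α₁)Γ(x−γ₂+α₂)/(Γ(x−γ₁+1)Γ(x−γ₂+1))`, with
`σ(x) = (x−γ₁)(x−γ₂)` and `τ(x) = b(x−γ₁+α₁)(x−γ₂+α₂) − (x−γ₁)(x−γ₂)`. -/
theorem stmt_18 (b α₁ α₂ γ₁ γ₂ : ℝ) (hb : 0 < b) (R : ℝ → ℝ)
    (hR : ∀ x : ℝ, R x = b ^ x * Real.Gamma (x - γ₁ + α₁) * Real.Gamma (x - γ₂ + α₂) /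
      (Real.Gamma (x - γ₁ + 1) * Real.Gamma (x - γ₂ + 1))) :
    ∀ x : ℝ, x - γ₁ + α₁ ≠ 0 → x - γ₂ + α₂ ≠ 0 → x - γ₁ + 1 ≠ 0 → x - γ₂ + 1 ≠ 0 →
      (x + 1 - γ₁) * (x + 1 - γ₂) * R (x + 1) - (x - γ₁) * (x - γ₂) * R x =
        (b * (x - γ₁ + α₁) * (x - γ₂ + α₂) - (x - γ₁) * (x - γ₂)) * R x := by
  intro x h1 h2 h3 h4
  have key : (x + 1 - γ₁) * (x + 1 - γ₂) * R (x + 1) =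
      b * (x - γ₁ + α₁) * (x - γ₂ + α₂) * R x := by
    have e1 : x + 1 - γ₁ + α₁ = (x - γ₁ + α₁) + 1 := by ring
    have e2 : x + 1 - γ₂ + α₂ = (x - γ₂ + α₂) + 1 := by ring
    have e3 : x + 1 - γ₁ + 1 = (x - γ₁ + 1) + 1 := by ring
    have e4 : x + 1 - γ₂ + 1 = (x - γ₂ + 1) + 1 := by ring
    rw [hR, hR, e1, e2, e3, e4, Real.Gamma_add_one h1, Real.Gamma_add_one h2,
      Real.Gamma_add_one h3, Real.Gamma_add_one h4,
      Real.rpow_add hb, Real.rpow_one]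
    set G1 := Real.Gamma (x - γ₁ + 1)
    set G2 := Real.Gamma (x - γ₂ + 1)
    by_cases hG : G1 * G2 = 0
    · rcases mul_eq_zero.mp hG with h | h <;>
        simp [h, mul_comm, mul_assoc, mul_left_comm]
    · have hG1 : G1 ≠ 0 := fun h => hG (by simp [h])
      have hG2 : G2 ≠ 0 := fun h => hG (by simp [h])
      field_simp
      ring
  rw [key]; ring
end
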